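/- Let n ≥ 2 and s ≥ 1 be integers and let a = (a_1,…,a_n) be a vector of positive integers with gcd(a_1,…,a_n) = 1. Then X_s(a) ≤ s^{-1/(n-1)}·X_1(a) + ((n−1)!)^{1/(n-1)}, where X_s(a) = F_s(a)/(s·a_1·a_2·…·a_n)^{1/(n-1)} is the normalized s-Frobenius number. -/

import Mathlib

/-!
Let `m = n - 1`, `α = (a₂, …, aₙ)` and `C = F_s - F_1 - 1`. Every `v > F_1` is representable, so
for each residue `k` mod `a₁` one can fix a lightest `w_k ∈ ℕᵐ` with `α ⬝ w_k + k ≡ F_s`, and it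
has `α ⬝ w_k ≤ F_s - α ⬝ y` whenever `α ⬝ y ≤ C` and `α ⬝ y ≡ k`, since the tail of a
representation of `F_s - α ⬝ y` competes. Then `y ↦ (w_k + y, k)` injects the lattice points of
the simplex `α ⬝ y ≤ C` into (tails of representations of `F_s`) × (residues), so there are at
most `a₁ · #reps(F_s) < a₁ s` of them. Comparing with the volume of the simplex,
`(C + 1)ᵐ ≤ m! · a₂ ⋯ aₙ · #{y | α ⬝ y ≤ C}`, gives `(F_s - F_1)ᵐ ≤ (n - 1)! · s · a₁ ⋯ aₙ`, and
dividing by `(s · a₁ ⋯ aₙ)^(1/(n-1))` is the claim.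
-/

open Finset Matrix

section WeightedSimplex

variable {ι : Type*} [Fintype ι] {α : ι → ℕ}

lemma le_of_dotProduct_le (hα : ∀ i, 0 < α i) {y : ι → ℕ} {T : ℕ} (h : α ⬝ᵥ y ≤ T) :
    y ≤ fun _ => T := fun i =>
  calc y i ≤ α i * y i := Nat.le_mul_of_pos_left _ (hα i)
    _ ≤ α ⬝ᵥ y := single_le_sum (f := fun j => α j * y j) (fun _ _ => Nat.zero_le _) (mem_univ i)
    _ ≤ T := h

variable [DecidableEq ι]

-- The box `Iic` only makes the set finite; for positive weights it is no constraint.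
def weightedSimplex (α : ι → ℕ) (T : ℕ) : Finset (ι → ℕ) :=
  (Iic fun _ => T).filter fun y => α ⬝ᵥ y ≤ T

def representations (α : ι → ℕ) (b : ℕ) : Finset (ι → ℕ) :=
  (Iic fun _ => b).filter fun z => α ⬝ᵥ z = b

lemma mem_weightedSimplex (hα : ∀ i, 0 < α i) {y : ι → ℕ} {T : ℕ} :
    y ∈ weightedSimplex α T ↔ α ⬝ᵥ y ≤ T := by
  simpa [weightedSimplex] using le_of_dotProduct_le hα

lemma mem_representations (hα : ∀ i, 0 < α i) {z : ι → ℕ} {b : ℕ} :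
    z ∈ representations α b ↔ α ⬝ᵥ z = b := by
  simpa [representations] using fun h => le_of_dotProduct_le hα h.le

lemma pow_le_factorial_mul_card_weightedSimplex_one (T : ℕ) :
    (T + 1) ^ Fintype.card ι ≤ (Fintype.card ι).factorial * #(weightedSimplex (1 : ι → ℕ) T) := by
  set d := Fintype.card ι
  -- Stars and bars: a multiset of size `T` on `Option ι` is determined by its counts on `ι`,
  -- the count of `none` being the slack.
  have hcount (x : Sym (Option ι) T) :
      x.1.count none + ∑ i, x.1.count (some i) = T := by
    rw [← Fintype.sum_option (fun o => x.1.count o), Multiset.sum_count_eq_card (by simp), x.2]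
  have hinj : Function.Injective fun (x : Sym (Option ι) T) (i : ι) => x.1.count (some i) := by
    intro x y hxy
    have hsome (i : ι) : x.1.count (some i) = y.1.count (some i) := congrFun hxy i
    have hnone : x.1.count none = y.1.count none := by
      have hx := hcount x
      have hy := hcount y
      simp only [hsome] at hx
      omega
    exact Sym.ext (Multiset.ext.2 fun o => o.casesOn hnone hsome)
  have hmaps : ∀ x ∈ (univ : Finset (Sym (Option ι) T)),
      (fun i => x.1.count (some i)) ∈ weightedSimplex (1 : ι → ℕ) T := by
    intro x _
    rw [mem_weightedSimplex (α := 1) fun _ => Nat.one_pos, one_dotProduct]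
    have := hcount x
    omega
  calc (T + 1) ^ d ≤ (T + 1).ascFactorial d := Nat.pow_succ_le_ascFactorial _ _
    _ = d.factorial * Fintype.card (Sym (Option ι) T) := by
      rw [Nat.ascFactorial_eq_factorial_mul_choose, Sym.card_sym_eq_choose, Fintype.card_option,
        show d + 1 + T - 1 = T + d by omega, Nat.choose_symm_add]
    _ ≤ d.factorial * #(weightedSimplex (1 : ι → ℕ) T) := by
      gcongr
      exact card_le_card_of_injOn _ hmaps hinj.injOn

lemma card_weightedSimplex_one_le (hα : ∀ i, 0 < α i) (T : ℕ) :
    #(weightedSimplex (1 : ι → ℕ) T) ≤ (∏ i, α i) * #(weightedSimplex α T) := by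
  have hmaps : ∀ x ∈ weightedSimplex (1 : ι → ℕ) T,
      (fun i => x i / α i, fun i => x i % α i) ∈
        weightedSimplex α T ×ˢ Fintype.piFinset fun i => range (α i) := by
    intro x hx
    rw [mem_weightedSimplex (α := 1) fun _ => Nat.one_pos, one_dotProduct] at hx
    simp only [mem_product, mem_weightedSimplex hα, Fintype.mem_piFinset, mem_range]
    exact ⟨(sum_le_sum fun i _ => Nat.mul_div_le (x i) (α i)).trans hx,
      fun i => Nat.mod_lt _ (hα i)⟩
  have hinj : Function.Injective fun (x : ι → ℕ) => (fun i => x i / α i, fun i => x i % α i) := by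
    intro x y hxy
    simp only [Prod.mk.injEq, funext_iff] at hxy
    funext i
    rw [← Nat.div_add_mod (x i) (α i), ← Nat.div_add_mod (y i) (α i), hxy.1 i, hxy.2 i]
  calc #(weightedSimplex (1 : ι → ℕ) T)
      ≤ #(weightedSimplex α T ×ˢ Fintype.piFinset fun i => range (α i)) :=
        card_le_card_of_injOn _ hmaps hinj.injOn
    _ = (∏ i, α i) * #(weightedSimplex α T) := by
      rw [card_product, Fintype.card_piFinset, mul_comm]
      simp only [card_range]

lemma pow_le_factorial_mul_prod_mul_card_weightedSimplex (hα : ∀ i, 0 < α i) (T : ℕ) :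
    (T + 1) ^ Fintype.card ι ≤
      (Fintype.card ι).factorial * ((∏ i, α i) * #(weightedSimplex α T)) :=
  (pow_le_factorial_mul_card_weightedSimplex_one T).trans
    (Nat.mul_le_mul_left _ (card_weightedSimplex_one_le hα T))

lemma card_weightedSimplex_le_mul_card_filter_modEq (hα : ∀ i, 0 < α i) {a₀ : ℕ} (ha₀ : 0 < a₀)
    {b C : ℕ} (hrep : ∀ y ∈ weightedSimplex α C,
      ∃ u, α ⬝ᵥ u + α ⬝ᵥ y ≤ b ∧ α ⬝ᵥ u + α ⬝ᵥ y ≡ b [MOD a₀]) :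
    #(weightedSimplex α C) ≤
      a₀ * #((weightedSimplex α b).filter fun u => α ⬝ᵥ u ≡ b [MOD a₀]) := by
  set R := (weightedSimplex α b).filter fun u => α ⬝ᵥ u ≡ b [MOD a₀]
  -- `W k` is a lightest vector whose weight lifts the residue `k` to `b`; translating `y` by
  -- `W (α ⬝ᵥ y % a₀)` lands in `R`, and is injective once the residue of `α ⬝ᵥ y` is recorded.
  have hmin (k : ℕ) : ∃ w, ∀ u, α ⬝ᵥ u + k ≡ b [MOD a₀] →
      α ⬝ᵥ w + k ≡ b [MOD a₀] ∧ α ⬝ᵥ w ≤ α ⬝ᵥ u := by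
    by_cases h : ∃ u, α ⬝ᵥ u + k ≡ b [MOD a₀]
    · obtain ⟨w, hw, hwmin⟩ :=
        (measure fun u => α ⬝ᵥ u).wf.has_min {u | α ⬝ᵥ u + k ≡ b [MOD a₀]} h
      exact ⟨w, fun u hu => ⟨hw, not_lt.1 (hwmin u hu)⟩⟩
    · exact ⟨0, fun u hu => (h ⟨u, hu⟩).elim⟩
  choose W hW using hmin
  set f : (ι → ℕ) → (ι → ℕ) × ℕ := fun y => (W (α ⬝ᵥ y % a₀) + y, α ⬝ᵥ y % a₀)
  have hmaps : ∀ y ∈ weightedSimplex α C, f y ∈ R ×ˢ range a₀ := by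
    intro y hy
    obtain ⟨u, hub, humod⟩ := hrep y hy
    have hmod (v : ι → ℕ) : α ⬝ᵥ v + α ⬝ᵥ y % a₀ ≡ α ⬝ᵥ v + α ⬝ᵥ y [MOD a₀] :=
      (Nat.mod_modEq _ _).add_left _
    obtain ⟨hWmod, hWle⟩ := hW _ u ((hmod u).trans humod)
    simp only [f, R, mem_product, mem_filter, mem_weightedSimplex hα, dotProduct_add, mem_range]
    exact ⟨⟨by omega, (hmod _).symm.trans hWmod⟩, Nat.mod_lt _ ha₀⟩
  have hinj : Set.InjOn f (weightedSimplex α C) := by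
    intro y _ y' _ hyy'
    simp only [f, Prod.mk.injEq] at hyy'
    rw [hyy'.2] at hyy'
    exact add_left_cancel hyy'.1
  calc #(weightedSimplex α C) ≤ #(R ×ˢ range a₀) := card_le_card_of_injOn f hmaps hinj
    _ = a₀ * #R := by rw [card_product, card_range, mul_comm]

end WeightedSimplex

section Representations

variable {m : ℕ}

lemma dotProduct_eq_mul_add_dotProduct_tail (a z : Fin (m + 1) → ℕ) :
    a ⬝ᵥ z = a 0 * z 0 + Fin.tail a ⬝ᵥ Fin.tail z :=
  Fin.sum_univ_succ _

lemma card_filter_modEq_le_card_representations {a : Fin (m + 1) → ℕ} (ha : ∀ i, 0 < a i)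
    (b : ℕ) :
    #((weightedSimplex (Fin.tail a) b).filter fun u => Fin.tail a ⬝ᵥ u ≡ b [MOD a 0]) ≤
      #(representations a b) := by
  have hα (i : Fin m) : 0 < Fin.tail a i := ha i.succ
  refine card_le_card_of_injOn (fun u => Fin.cons ((b - Fin.tail a ⬝ᵥ u) / a 0) u)
    (fun u hu => ?_) fun u _ u' _ h => by simpa using congrArg Fin.tail h
  rw [mem_coe, mem_filter, mem_weightedSimplex hα] at hu
  rw [mem_coe, mem_representations ha, dotProduct_eq_mul_add_dotProduct_tail]
  dsimp only
  rw [Fin.cons_zero,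
    Fin.tail_cons, Nat.mul_div_cancel' ((Nat.modEq_iff_dvd' hu.1).1 hu.2)]
  omega

theorem pow_le_factorial_mul_prod_mul_card_representations {a : Fin (m + 1) → ℕ}
    (ha : ∀ i, 0 < a i) {c : ℕ} (hrep : ∀ v, c ≤ v → (representations a v).Nonempty) (C : ℕ) :
    (C + 1) ^ m ≤ m.factorial * ((∏ i, a i) * #(representations a (c + C))) := by
  set α := Fin.tail a with hα_def
  have hα (i : Fin m) : 0 < α i := ha i.succ
  have hrep' : ∀ y ∈ weightedSimplex α C,
      ∃ u, α ⬝ᵥ u + α ⬝ᵥ y ≤ c + C ∧ α ⬝ᵥ u + α ⬝ᵥ y ≡ c + C [MOD a 0] := by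
    intro y hy
    rw [mem_weightedSimplex hα] at hy
    obtain ⟨z, hz⟩ := hrep (c + C - α ⬝ᵥ y) (by omega)
    rw [mem_representations ha, dotProduct_eq_mul_add_dotProduct_tail, ← hα_def] at hz
    have hsum : c + C = α ⬝ᵥ Fin.tail z + α ⬝ᵥ y + a 0 * z 0 := by omega
    refine ⟨Fin.tail z, by omega, ?_⟩
    rw [hsum, Nat.ModEq, Nat.add_mul_mod_self_left]
  calc (C + 1) ^ m ≤ m.factorial * ((∏ i, α i) * #(weightedSimplex α C)) := by
        simpa using pow_le_factorial_mul_prod_mul_card_weightedSimplex hα C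
    _ ≤ m.factorial * ((∏ i, α i) * (a 0 * #(representations a (c + C)))) := by
        gcongr
        exact (card_weightedSimplex_le_mul_card_filter_modEq hα (ha 0) hrep').trans
          (Nat.mul_le_mul_left _ (card_filter_modEq_le_card_representations ha _))
    _ = m.factorial * ((∏ i, a i) * #(representations a (c + C))) := by
        rw [Fin.prod_univ_succ, hα_def]
        simp only [Fin.tail]
        ring

end Representations

section Frobenius

variable {ι : Type*} [Fintype ι] {a : ι → ℕ}

lemma setOf_intSum_eq_of_neg {b : ℤ} (hb : b < 0) :
    {z : ι → ℕ | ∑ i, (a i : ℤ) * (z i : ℤ) = b} = ∅ :=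
  Set.eq_empty_of_forall_notMem fun z hz =>
    (Finset.sum_nonneg fun i _ => by positivity).not_gt (hz.symm ▸ hb)

lemma setOf_intSum_eq_natCast [DecidableEq ι] (ha : ∀ i, 0 < a i) (b : ℕ) :
    {z : ι → ℕ | ∑ i, (a i : ℤ) * (z i : ℤ) = b} = representations a b := by
  ext z
  rw [Finset.mem_coe, mem_representations ha, dotProduct, Set.mem_ofPred_eq]
  norm_cast

theorem frobenius_sub_frobenius_le {m s : ℕ} (hm : 0 < m) {a : Fin (m + 1) → ℕ}
    (ha : ∀ i, 0 < a i) {Fs F1 : ℤ}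
    (hFs : IsGreatest
      {b : ℤ | {z : Fin (m + 1) → ℕ | ∑ i, (a i : ℤ) * (z i : ℤ) = b}.ncard < s} Fs)
    (hF1 : IsGreatest
      {b : ℤ | {z : Fin (m + 1) → ℕ | ∑ i, (a i : ℤ) * (z i : ℤ) = b}.ncard < 1} F1) :
    (Fs - F1 : ℝ) ≤ (m.factorial * (s * ∏ i, (a i : ℝ))) ^ (m : ℝ)⁻¹ := by
  have hF1_ge : -1 ≤ F1 := hF1.2 (by simp [setOf_intSum_eq_of_neg (a := a) (b := -1) (by norm_num)])
  have hrep : ∀ v : ℕ, (F1 + 1).toNat ≤ v → (representations a v).Nonempty := by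
    intro v hv
    have hv_notMem : (v : ℤ) ∉ {b : ℤ | {z : Fin (m + 1) → ℕ |
        ∑ i, (a i : ℤ) * (z i : ℤ) = b}.ncard < 1} := fun h => by have := hF1.2 h; omega
    simpa [setOf_intSum_eq_natCast ha, Finset.nonempty_iff_ne_empty] using hv_notMem
  rcases le_or_gt Fs F1 with hle | hlt
  · have : (Fs : ℝ) ≤ F1 := by exact_mod_cast hle
    linarith [Real.rpow_nonneg (by positivity : (0 : ℝ) ≤ m.factorial * (s * ∏ i, (a i : ℝ)))
      (m : ℝ)⁻¹]
  obtain ⟨C, hC⟩ : ∃ C : ℕ, Fs = (F1 + 1).toNat + C := ⟨(Fs - F1 - 1).toNat, by omega⟩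
  have hcard : #(representations a ((F1 + 1).toNat + C)) < s := by
    have h := hFs.1
    rwa [Set.mem_ofPred_eq, hC, ← Nat.cast_add, setOf_intSum_eq_natCast ha,
      Set.ncard_coe_finset] at h
  have hpow := pow_le_factorial_mul_prod_mul_card_representations ha hrep C
  have hFsF1 : (Fs - F1 : ℝ) = C + 1 := by
    rw [← Int.cast_sub, show Fs - F1 = C + 1 by omega]; push_cast; ring
  rw [hFsF1, Real.le_rpow_inv_iff_of_pos (by positivity) (by positivity) (by positivity),
    Real.rpow_natCast]
  have hbound : (C + 1) ^ m ≤ m.factorial * ((∏ i, a i) * s) :=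
    hpow.trans (Nat.mul_le_mul_left _ (Nat.mul_le_mul_left _ hcard.le))
  rw [mul_comm (s : ℝ)]
  exact_mod_cast hbound

end Frobenius

theorem normalized_sFrobenius_bound_general {n s : ℕ} (hn : 2 ≤ n) (hs : 1 ≤ s)
    (a : Fin n → ℕ) (ha : ∀ i, 0 < a i)
    (Fs F1 : ℤ)
    (hFs : IsGreatest
      {b : ℤ | {z : Fin n → ℕ | ∑ i, (a i : ℤ) * (z i : ℤ) = b}.ncard < s} Fs)
    (hF1 : IsGreatest
      {b : ℤ | {z : Fin n → ℕ | ∑ i, (a i : ℤ) * (z i : ℤ) = b}.ncard < 1} F1) :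
    (Fs : ℝ) / ((s : ℝ) * ∏ i, (a i : ℝ)) ^ ((1 : ℝ) / ((n : ℝ) - 1))
      ≤ (s : ℝ) ^ (-((1 : ℝ) / ((n : ℝ) - 1))) *
          ((F1 : ℝ) / ((1 : ℝ) * ∏ i, (a i : ℝ)) ^ ((1 : ℝ) / ((n : ℝ) - 1)))
        + (((n - 1).factorial : ℝ)) ^ ((1 : ℝ) / ((n : ℝ) - 1)) := by
  obtain ⟨m, rfl⟩ : ∃ m, n = m + 1 := ⟨n - 1, by omega⟩
  have key := frobenius_sub_frobenius_le (s := s) (by omega) ha hFs hF1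
  rw [show ((m + 1 : ℕ) : ℝ) - 1 = m by push_cast; ring, Nat.add_sub_cancel, one_mul, one_div]
  have hs₀ : (0 : ℝ) < s := by exact_mod_cast hs
  have hQ₀ : (0 : ℝ) < ∏ i, (a i : ℝ) := prod_pos fun i _ => by exact_mod_cast ha i
  have hsQ : (0 : ℝ) < ((s : ℝ) * ∏ i, (a i : ℝ)) ^ (m : ℝ)⁻¹ := by positivity
  rw [Real.rpow_neg hs₀.le, ← div_eq_inv_mul, div_div, ← Real.mul_rpow hQ₀.le hs₀.le,
    mul_comm _ (s : ℝ), ← sub_le_iff_le_add', ← sub_div, div_le_iff₀ hsQ,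
    ← Real.mul_rpow (by positivity) (by positivity)]
  exact key

/-- **Bound on the normalized s-Frobenius number** (equation (8) in
Aliev–Fukshansky–Henk): `X_s(a) ≤ s^(-1/(n-1)) · X₁(a) + ((n-1)!)^(1/(n-1))`, where
`X_s(a) = F_s(a) / (s · a₁ ⋯ aₙ)^(1/(n-1))` is the normalized `s`-Frobenius number. -/
theorem normalized_sFrobenius_bound {n s : ℕ} (hn : 2 ≤ n) (hs : 1 ≤ s)
    (a : Fin n → ℕ) (ha : ∀ i, 0 < a i) (hgcd : Finset.univ.gcd a = 1)
    (Fs F1 : ℤ)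
    (hFs : IsGreatest
      {b : ℤ | {z : Fin n → ℕ | ∑ i, (a i : ℤ) * (z i : ℤ) = b}.ncard < s} Fs)
    (hF1 : IsGreatest
      {b : ℤ | {z : Fin n → ℕ | ∑ i, (a i : ℤ) * (z i : ℤ) = b}.ncard < 1} F1) :
    (Fs : ℝ) / ((s : ℝ) * ∏ i, (a i : ℝ)) ^ ((1 : ℝ) / ((n : ℝ) - 1))
      ≤ (s : ℝ) ^ (-((1 : ℝ) / ((n : ℝ) - 1))) *
          ((F1 : ℝ) / ((1 : ℝ) * ∏ i, (a i : ℝ)) ^ ((1 : ℝ) / ((n : ℝ) - 1)))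
        + (((n - 1).factorial : ℝ)) ^ ((1 : ℝ) / ((n : ℝ) - 1)) :=
  normalized_sFrobenius_bound_general hn hs a ha Fs F1 hFs hF1
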